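/- Let X, X', S, F be random variables on a common probability space taking values in finite sets, such that X' is conditionally independent of the pair (S,F) given X (Markov chain (S,F) — X — X'). Let m be a real number. If I(X';S) ≤ m, then I(X';F) ≤ H(X|S) + m. -/
import Mathlib


open scoped BigOperators
open Finset

namespace MaSS

variable {Ω : Type*} [Fintype Ω]

open Classical in
/-- Probability of an event under the pmf `p` on the finite sample space `Ω`. -/
noncomputable def prE (p : Ω → ℝ) (E : Ω → Prop) : ℝ :=
  ∑ ω, if E ω then p ω else 0

/-- Probability that the random variable `X` takes the value `a`. -/
noncomputable def pr {α : Type*} (p : Ω → ℝ) (X : Ω → α) (a : α) : ℝ :=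
  prE p (fun ω => X ω = a)

/-- Shannon entropy H(X) = −∑ₐ P(X=a) log P(X=a) (natural logarithm,
with the convention `Real.log 0 = 0`). -/
noncomputable def ent {α : Type*} [Fintype α] (p : Ω → ℝ) (X : Ω → α) : ℝ :=
  -∑ a, pr p X a * Real.log (pr p X a)

/-- Conditional entropy H(X|Y) = −∑_{a,b} P(X=a, Y=b) log P(X=a | Y=b),
where P(X=a | Y=b) = P(X=a, Y=b) / P(Y=b). -/
noncomputable def condEnt {α β : Type*} [Fintype α] [Fintype β]
    (p : Ω → ℝ) (X : Ω → α) (Y : Ω → β) : ℝ :=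
  -∑ a, ∑ b, pr p (fun ω => (X ω, Y ω)) (a, b) *
      Real.log (pr p (fun ω => (X ω, Y ω)) (a, b) / pr p Y b)

/-- Mutual information I(X;Y) = H(X) − H(X|Y). -/
noncomputable def mi {α β : Type*} [Fintype α] [Fintype β]
    (p : Ω → ℝ) (X : Ω → α) (Y : Ω → β) : ℝ :=
  ent p X - condEnt p X Y

/-- Conditional mutual information I(X;Y|Z) = H(X|Z) − H(X|(Y,Z)). -/
noncomputable def cmi {α β γ : Type*} [Fintype α] [Fintype β] [Fintype γ]
    (p : Ω → ℝ) (X : Ω → α) (Y : Ω → β) (Z : Ω → γ) : ℝ :=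
  condEnt p X Z - condEnt p X (fun ω => (Y ω, Z ω))

/-- Markov chain Z — X — X': X' is conditionally independent of Z given X, i.e.
P(X'=x', Z=z | X=x) = P(X'=x' | X=x) · P(Z=z | X=x) for all x with P(X=x) > 0. -/
def MarkovChain {α β γ : Type*} (p : Ω → ℝ) (Z : Ω → γ) (X : Ω → α) (X' : Ω → β) : Prop :=
  ∀ x, 0 < pr p X x → ∀ x' z,
    prE p (fun ω => X' ω = x' ∧ Z ω = z ∧ X ω = x) / pr p X x =
      (prE p (fun ω => X' ω = x' ∧ X ω = x) / pr p X x) *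
      (prE p (fun ω => Z ω = z ∧ X ω = x) / pr p X x)

section Helpers
set_option linter.unusedSectionVars false

open Classical

lemma prE_nonneg (p : Ω → ℝ) (hp0 : ∀ ω, 0 ≤ p ω) (E : Ω → Prop) : 0 ≤ prE p E := by
  unfold prE
  apply Finset.sum_nonneg
  intro ω _
  split <;> simp [hp0 ω]

lemma prE_congr (p : Ω → ℝ) {E E' : Ω → Prop} (h : ∀ ω, E ω ↔ E' ω) :
    prE p E = prE p E' := by
  unfold prE
  exact Finset.sum_congr rfl fun ω _ => by simp [h ω]

lemma prE_mono (p : Ω → ℝ) (hp0 : ∀ ω, 0 ≤ p ω) {E E' : Ω → Prop}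
    (h : ∀ ω, E ω → E' ω) : prE p E ≤ prE p E' := by
  unfold prE
  apply Finset.sum_le_sum
  intro ω _
  by_cases hE : E ω
  · simp [hE, h ω hE]
  · simp only [hE, if_false]
    split <;> simp [hp0 ω]

lemma prE_sum_fiber {β : Type*} [Fintype β] (p : Ω → ℝ) (E : Ω → Prop) (Y : Ω → β) :
    ∑ b, prE p (fun ω => E ω ∧ Y ω = b) = prE p E := by
  unfold prE
  rw [Finset.sum_comm]
  refine Finset.sum_congr rfl fun ω _ => ?_
  by_cases hE : E ω <;> simp [hE]

lemma pr_pair (p : Ω → ℝ) {α β : Type*} (A : Ω → α) (B : Ω → β) (a : α) (b : β) :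
    pr p (fun ω => (A ω, B ω)) (a, b) = prE p (fun ω => A ω = a ∧ B ω = b) := by
  unfold pr
  exact prE_congr p fun ω => by simp [Prod.ext_iff]

lemma sum_pr {α : Type*} [Fintype α] (p : Ω → ℝ) (hp1 : ∑ ω, p ω = 1) (X : Ω → α) :
    ∑ a, pr p X a = 1 := by
  unfold pr prE
  rw [Finset.sum_comm, ← hp1]
  exact Finset.sum_congr rfl fun ω _ => by simp

section Triple

variable {α β γ : Type*} [Fintype α] [Fintype β] [Fintype γ]

/-- joint of a triple -/
noncomputable def q3 (p : Ω → ℝ) (A : Ω → α) (B : Ω → β) (C : Ω → γ) (a : α) (b : β) (c : γ) : ℝ :=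
  prE p (fun ω => A ω = a ∧ B ω = b ∧ C ω = c)

lemma q3_sum_b (p : Ω → ℝ) (A : Ω → α) (B : Ω → β) (C : Ω → γ) (a : α) (c : γ) :
    ∑ b, q3 p A B C a b c = prE p (fun ω => A ω = a ∧ C ω = c) := by
  rw [← prE_sum_fiber p (fun ω => A ω = a ∧ C ω = c) B]
  exact Finset.sum_congr rfl fun b _ => prE_congr p fun ω => by tauto

lemma q3_sum_a (p : Ω → ℝ) (A : Ω → α) (B : Ω → β) (C : Ω → γ) (b : β) (c : γ) :
    ∑ a, q3 p A B C a b c = prE p (fun ω => B ω = b ∧ C ω = c) := by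
  rw [← prE_sum_fiber p (fun ω => B ω = b ∧ C ω = c) A]
  exact Finset.sum_congr rfl fun a _ => prE_congr p fun ω => by tauto

lemma q3_sum_c (p : Ω → ℝ) (A : Ω → α) (B : Ω → β) (C : Ω → γ) (a : α) (b : β) :
    ∑ c, q3 p A B C a b c = prE p (fun ω => A ω = a ∧ B ω = b) := by
  rw [← prE_sum_fiber p (fun ω => A ω = a ∧ B ω = b) C]
  exact Finset.sum_congr rfl fun c _ => prE_congr p fun ω => by tauto

lemma sum_prE_pair_fst (p : Ω → ℝ) (A : Ω → α) (C : Ω → γ) (c : γ) :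
    ∑ a, prE p (fun ω => A ω = a ∧ C ω = c) = pr p C c := by
  rw [show pr p C c = prE p (fun ω => C ω = c) from rfl,
    ← prE_sum_fiber p (fun ω => C ω = c) A]
  exact Finset.sum_congr rfl fun a _ => prE_congr p fun ω => by tauto

/-- expansion of H(A | (B,C)) as a triple sum -/
lemma condEnt_pair_expand (p : Ω → ℝ) (A : Ω → α) (B : Ω → β) (C : Ω → γ) :
    condEnt p A (fun ω => (B ω, C ω)) =
      -∑ a, ∑ b, ∑ c, q3 p A B C a b c *
        Real.log (q3 p A B C a b c / prE p (fun ω => B ω = b ∧ C ω = c)) := by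
  unfold condEnt
  congr 1
  refine Finset.sum_congr rfl fun a _ => ?_
  rw [Fintype.sum_prod_type]
  refine Finset.sum_congr rfl fun b _ => Finset.sum_congr rfl fun c _ => ?_
  have h1 : pr p (fun ω => (A ω, (B ω, C ω))) (a, (b, c)) = q3 p A B C a b c := by
    unfold pr q3
    exact prE_congr p fun ω => by simp [Prod.ext_iff, and_assoc]
  have h2 : pr p (fun ω => (B ω, C ω)) (b, c) = prE p (fun ω => B ω = b ∧ C ω = c) :=
    pr_pair p B C b c
  rw [h1, h2]

/-- expansion of H(A | C) as a triple sum (inserting a dummy sum over b) -/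
lemma condEnt_snd_expand (p : Ω → ℝ) (A : Ω → α) (B : Ω → β) (C : Ω → γ) :
    condEnt p A C =
      -∑ a, ∑ b, ∑ c, q3 p A B C a b c *
        Real.log (prE p (fun ω => A ω = a ∧ C ω = c) / pr p C c) := by
  unfold condEnt
  congr 1
  refine Finset.sum_congr rfl fun a _ => ?_
  rw [Finset.sum_comm]
  refine Finset.sum_congr rfl fun c _ => ?_
  rw [pr_pair p A C a c, ← q3_sum_b p A B C a c, Finset.sum_mul]

/-- expansion of H(B | C) as a triple sum over (a,b,c) -/
lemma condEnt_fst_expand (p : Ω → ℝ) (A : Ω → α) (B : Ω → β) (C : Ω → γ) :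
    condEnt p B C =
      -∑ a, ∑ b, ∑ c, q3 p A B C a b c *
        Real.log (prE p (fun ω => B ω = b ∧ C ω = c) / pr p C c) := by
  unfold condEnt
  congr 1
  have h : ∀ f : α → β → γ → ℝ, ∑ a, ∑ b, ∑ c, f a b c = ∑ b, ∑ c, ∑ a, f a b c := by
    intro f
    rw [Finset.sum_comm]
    exact Finset.sum_congr rfl fun b _ => Finset.sum_comm
  rw [h]
  refine Finset.sum_congr rfl fun b _ => ?_
  refine Finset.sum_congr rfl fun c _ => ?_
  rw [pr_pair p B C b c, ← q3_sum_a p A B C b c, Finset.sum_mul]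

/-- swapping the two conditioning variables -/
lemma condEnt_swap (p : Ω → ℝ) (A : Ω → α) (B : Ω → β) (C : Ω → γ) :
    condEnt p A (fun ω => (B ω, C ω)) = condEnt p A (fun ω => (C ω, B ω)) := by
  rw [condEnt_pair_expand p A B C, condEnt_pair_expand p A C B]
  congr 1
  refine Finset.sum_congr rfl fun a _ => ?_
  rw [Finset.sum_comm]
  refine Finset.sum_congr rfl fun c _ => Finset.sum_congr rfl fun b _ => ?_
  rw [show q3 p A C B a c b = q3 p A B C a b c from prE_congr p fun ω => by tauto,
    show prE p (fun ω => C ω = c ∧ B ω = b) = prE p (fun ω => B ω = b ∧ C ω = c) from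
      prE_congr p fun ω => by tauto]

end Triple

/-- termwise: x log(x/y) ≤ 0 when 0 ≤ x ≤ y -/
lemma mul_log_nonpos {x y : ℝ} (hx : 0 ≤ x) (hxy : x ≤ y) : x * Real.log (x / y) ≤ 0 := by
  rcases eq_or_lt_of_le hx with h0 | h0
  · simp [← h0]
  · have hy : 0 < y := lt_of_lt_of_le h0 hxy
    have : x / y ≤ 1 := (div_le_one hy).2 hxy
    have hlog : Real.log (x / y) ≤ 0 := Real.log_nonpos (by positivity) this
    exact mul_nonpos_of_nonneg_of_nonpos hx hlog

/-- conditional entropy is nonnegative -/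
lemma condEnt_nonneg {α β : Type*} [Fintype α] [Fintype β]
    (p : Ω → ℝ) (hp0 : ∀ ω, 0 ≤ p ω) (A : Ω → α) (B : Ω → β) :
    0 ≤ condEnt p A B := by
  unfold condEnt
  rw [neg_nonneg]
  apply Finset.sum_nonpos
  intro a _
  apply Finset.sum_nonpos
  intro b _
  rw [pr_pair p A B a b]
  refine mul_log_nonpos (prE_nonneg p hp0 _) ?_
  exact prE_mono p hp0 fun ω h => h.2

/-- key termwise inequality for the data-processing/conditioning bound -/
lemma log_term_key {q r s t : ℝ} (hq : 0 ≤ q) (hqr : q ≤ r) (hqs : q ≤ s) (hst : s ≤ t) :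
    q - s * r / t ≤ q * (Real.log (q / r) - Real.log (s / t)) := by
  rcases eq_or_lt_of_le hq with h0 | h0
  · rw [← h0]
    have hr : (0:ℝ) ≤ r := h0 ▸ hqr
    have hs : (0:ℝ) ≤ s := h0 ▸ hqs
    have ht : (0:ℝ) ≤ t := hs.trans hst
    simp only [zero_mul, zero_sub, neg_nonpos]
    positivity
  · have hr : 0 < r := lt_of_lt_of_le h0 hqr
    have hs : 0 < s := lt_of_lt_of_le h0 hqs
    have ht : 0 < t := lt_of_lt_of_le hs hst
    set y := s * r / t with hy
    have hypos : 0 < y := by positivity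
    have hlog : Real.log (y / q) ≤ y / q - 1 := Real.log_le_sub_one_of_pos (by positivity)
    have h2 : q * Real.log (y / q) ≤ y - q := by
      have := mul_le_mul_of_nonneg_left hlog hq
      calc q * Real.log (y / q) ≤ q * (y / q - 1) := this
        _ = y - q := by field_simp
    have h3 : Real.log (y / q) = -(Real.log (q / r) - Real.log (s / t)) := by
      rw [hy, Real.log_div (by positivity) (ne_of_gt h0),
        Real.log_div (by positivity) (ne_of_gt ht),
        Real.log_mul (ne_of_gt hs) (ne_of_gt hr),
        Real.log_div (ne_of_gt h0) (ne_of_gt hr),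
        Real.log_div (ne_of_gt hs) (ne_of_gt ht)]
      ring
    rw [h3, mul_neg] at h2
    linarith

/-- termwise identity underlying symmetry of conditional mutual information -/
lemma log_term_symm {q r s t : ℝ} (hq : 0 ≤ q) (hqr : q ≤ r) (hqs : q ≤ s) (hst : s ≤ t) :
    q * Real.log (q / r) - q * Real.log (s / t) =
    q * Real.log (q / s) - q * Real.log (r / t) := by
  rcases eq_or_lt_of_le hq with h0 | h0
  · rw [← h0]; ring
  · have hr : 0 < r := lt_of_lt_of_le h0 hqr
    have hs : 0 < s := lt_of_lt_of_le h0 hqs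
    have ht : 0 < t := lt_of_lt_of_le hs hst
    rw [Real.log_div (ne_of_gt h0) (ne_of_gt hr), Real.log_div (ne_of_gt hs) (ne_of_gt ht),
      Real.log_div (ne_of_gt h0) (ne_of_gt hs), Real.log_div (ne_of_gt hr) (ne_of_gt ht)]
    ring

end Helpers
section Main
set_option linter.unusedSectionVars false

variable {α β γ : Type*} [Fintype α] [Fintype β] [Fintype γ]

lemma sum3_reorder (f : α → β → γ → ℝ) :
    ∑ a, ∑ b, ∑ c, f a b c = ∑ c, ∑ a, ∑ b, f a b c := by
  calc ∑ a, ∑ b, ∑ c, f a b c = ∑ a, ∑ c, ∑ b, f a b c :=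
        Finset.sum_congr rfl fun a _ => Finset.sum_comm
    _ = ∑ c, ∑ a, ∑ b, f a b c := Finset.sum_comm

/-- conditioning on more reduces conditional entropy: H(A|(B,C)) ≤ H(A|C) -/
lemma condEnt_cond_le (p : Ω → ℝ) (hp0 : ∀ ω, 0 ≤ p ω) (hp1 : ∑ ω, p ω = 1)
    (A : Ω → α) (B : Ω → β) (C : Ω → γ) :
    condEnt p A (fun ω => (B ω, C ω)) ≤ condEnt p A C := by
  rw [condEnt_pair_expand p A B C, condEnt_snd_expand p A B C, neg_le_neg_iff]
  -- goal: ∑∑∑ q log(s/t) ≤ ∑∑∑ q log(q/r)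
  have hsum1 : ∑ a, ∑ b, ∑ c, q3 p A B C a b c = 1 := by
    have : ∀ a, ∑ b, ∑ c, q3 p A B C a b c = pr p A a := by
      intro a
      rw [show pr p A a = prE p (fun ω => A ω = a) from rfl,
        ← prE_sum_fiber p (fun ω => A ω = a) B]
      exact Finset.sum_congr rfl fun b _ => q3_sum_c p A B C a b
    rw [Finset.sum_congr rfl fun a _ => this a]
    exact sum_pr p hp1 A
  have hsum2 : ∑ a, ∑ b, ∑ c,
      (prE p (fun ω => A ω = a ∧ C ω = c) * prE p (fun ω => B ω = b ∧ C ω = c) / pr p C c) ≤ 1 := by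
    rw [sum3_reorder]
    have hc : ∀ c, ∑ a, ∑ b,
        (prE p (fun ω => A ω = a ∧ C ω = c) * prE p (fun ω => B ω = b ∧ C ω = c) / pr p C c)
        = pr p C c * (pr p C c / pr p C c) := by
      intro c
      have e1 : ∀ a, ∑ b,
          prE p (fun ω => A ω = a ∧ C ω = c) * prE p (fun ω => B ω = b ∧ C ω = c) / pr p C c
          = prE p (fun ω => A ω = a ∧ C ω = c) *
            ((∑ b, prE p (fun ω => B ω = b ∧ C ω = c)) / pr p C c) := by
        intro a
        rw [Finset.sum_div, Finset.mul_sum]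
        exact Finset.sum_congr rfl fun b _ => mul_div_assoc _ _ _
      rw [Finset.sum_congr rfl fun a _ => e1 a, ← Finset.sum_mul,
        sum_prE_pair_fst p B C c, sum_prE_pair_fst p A C c]
    rw [Finset.sum_congr rfl fun c _ => hc c]
    calc ∑ c, pr p C c * (pr p C c / pr p C c) ≤ ∑ c, pr p C c := by
          refine Finset.sum_le_sum fun c _ => ?_
          have hnn : (0:ℝ) ≤ pr p C c := prE_nonneg p hp0 _
          rcases eq_or_lt_of_le hnn with h0 | h0
          · rw [← h0]
            simp
          · rw [div_self (ne_of_gt h0), mul_one]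
      _ = 1 := sum_pr p hp1 C
  have key : ∀ a b c, q3 p A B C a b c -
      prE p (fun ω => A ω = a ∧ C ω = c) * prE p (fun ω => B ω = b ∧ C ω = c) / pr p C c ≤
      q3 p A B C a b c * Real.log (q3 p A B C a b c / prE p (fun ω => B ω = b ∧ C ω = c)) -
      q3 p A B C a b c * Real.log (prE p (fun ω => A ω = a ∧ C ω = c) / pr p C c) := by
    intro a b c
    have h := log_term_key (q := q3 p A B C a b c)
      (r := prE p (fun ω => B ω = b ∧ C ω = c))
      (s := prE p (fun ω => A ω = a ∧ C ω = c)) (t := pr p C c)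
      (prE_nonneg p hp0 _)
      (prE_mono p hp0 fun ω h => ⟨h.2.1, h.2.2⟩)
      (prE_mono p hp0 fun ω h => ⟨h.1, h.2.2⟩)
      (prE_mono p hp0 fun ω h => h.2)
    rw [mul_sub] at h
    linarith [h]
  have := Finset.sum_le_sum (s := (Finset.univ : Finset α)) fun a _ =>
    Finset.sum_le_sum (s := (Finset.univ : Finset β)) fun b _ =>
    Finset.sum_le_sum (s := (Finset.univ : Finset γ)) fun c _ => key a b c
  simp only [Finset.sum_sub_distrib] at this
  rw [hsum1] at this
  linarith [hsum2, this]

/-- Markov chain: H(X'|(X,Z)) = H(X'|X) -/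
lemma condEnt_markov (p : Ω → ℝ) (hp0 : ∀ ω, 0 ≤ p ω)
    (Z : Ω → γ) (X : Ω → α) (X' : Ω → β) (hmc : MarkovChain p Z X X') :
    condEnt p X' (fun ω => (X ω, Z ω)) = condEnt p X' X := by
  rw [condEnt_pair_expand p X' X Z]
  unfold condEnt
  congr 1
  refine Finset.sum_congr rfl fun x' _ => ?_
  refine Finset.sum_congr rfl fun x _ => ?_
  rw [pr_pair p X' X x' x]
  by_cases htpos : 0 < pr p X x
  · have ht0 : pr p X x ≠ 0 := ne_of_gt htpos
    have hq : ∀ z, q3 p X' X Z x' x z =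
        prE p (fun ω => X' ω = x' ∧ X ω = x) * prE p (fun ω => X ω = x ∧ Z ω = z) / pr p X x := by
      intro z
      have h := hmc x htpos x' z
      rw [show prE p (fun ω => X' ω = x' ∧ Z ω = z ∧ X ω = x) = q3 p X' X Z x' x z from
          prE_congr p fun ω => by tauto,
        show prE p (fun ω => Z ω = z ∧ X ω = x) = prE p (fun ω => X ω = x ∧ Z ω = z) from
          prE_congr p fun ω => by tauto] at h
      have h2 : q3 p X' X Z x' x z =
          prE p (fun ω => X' ω = x' ∧ X ω = x) / pr p X x *
          (prE p (fun ω => X ω = x ∧ Z ω = z) / pr p X x) * pr p X x := by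
        rw [← h]
        field_simp
      rw [h2]
      field_simp <;> ring
    have hterm : ∀ z, q3 p X' X Z x' x z *
        Real.log (q3 p X' X Z x' x z / prE p (fun ω => X ω = x ∧ Z ω = z)) =
        q3 p X' X Z x' x z *
        Real.log (prE p (fun ω => X' ω = x' ∧ X ω = x) / pr p X x) := by
      intro z
      have hq3nn : (0:ℝ) ≤ q3 p X' X Z x' x z := prE_nonneg p hp0 _
      rcases eq_or_lt_of_le hq3nn with h0 | h0
      · rw [← h0]
        simp
      · have hr : 0 < prE p (fun ω => X ω = x ∧ Z ω = z) :=
          lt_of_lt_of_le h0 (prE_mono p hp0 fun ω h => ⟨h.2.1, h.2.2⟩)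
        have hrne : prE p (fun ω => X ω = x ∧ Z ω = z) ≠ 0 := ne_of_gt hr
        have harg : q3 p X' X Z x' x z / prE p (fun ω => X ω = x ∧ Z ω = z) =
            prE p (fun ω => X' ω = x' ∧ X ω = x) / pr p X x := by
          rw [hq z]
          field_simp <;> ring
        rw [harg]
    rw [Finset.sum_congr rfl fun z _ => hterm z, ← Finset.sum_mul,
      q3_sum_c p X' X Z x' x]
  · -- pr p X x = 0
    have ht0 : pr p X x = 0 :=
      le_antisymm (not_lt.1 htpos) (prE_nonneg p hp0 _)
    have hu0 : prE p (fun ω => X' ω = x' ∧ X ω = x) = 0 :=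
      le_antisymm (ht0 ▸ prE_mono p hp0 fun ω h => h.2) (prE_nonneg p hp0 _)
    have hq0 : ∀ z, q3 p X' X Z x' x z = 0 := fun z =>
      le_antisymm (ht0 ▸ prE_mono p hp0 fun ω h => h.2.1) (prE_nonneg p hp0 _)
    rw [hu0]
    simp [hq0]

/-- symmetry of conditional mutual information (as a difference of conditional entropies) -/
lemma cmi_symm (p : Ω → ℝ) (hp0 : ∀ ω, 0 ≤ p ω)
    (A : Ω → α) (B : Ω → β) (C : Ω → γ) :
    condEnt p A C - condEnt p A (fun ω => (B ω, C ω)) =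
    condEnt p B C - condEnt p B (fun ω => (A ω, C ω)) := by
  have e : condEnt p B (fun ω => (A ω, C ω)) =
      -∑ a, ∑ b, ∑ c, q3 p A B C a b c *
        Real.log (q3 p A B C a b c / prE p (fun ω => A ω = a ∧ C ω = c)) := by
    rw [condEnt_pair_expand p B A C]
    congr 1
    rw [Finset.sum_comm]
    refine Finset.sum_congr rfl fun a _ => Finset.sum_congr rfl fun b _ =>
      Finset.sum_congr rfl fun c _ => ?_
    rw [show q3 p B A C b a c = q3 p A B C a b c from prE_congr p fun ω => by tauto]
  rw [condEnt_snd_expand p A B C, condEnt_pair_expand p A B C, condEnt_fst_expand p A B C, e,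
    neg_sub_neg, neg_sub_neg]
  simp only [← Finset.sum_sub_distrib]
  refine Finset.sum_congr rfl fun a _ => Finset.sum_congr rfl fun b _ =>
    Finset.sum_congr rfl fun c _ => ?_
  exact log_term_symm (prE_nonneg p hp0 _)
    (prE_mono p hp0 fun ω h => ⟨h.2.1, h.2.2⟩)
    (prE_mono p hp0 fun ω h => ⟨h.1, h.2.2⟩)
    (prE_mono p hp0 fun ω h => h.2)

end Main

/-- for the Markov chain (S,F) — X — X', if I(X';S) ≤ m then
I(X';F) ≤ H(X|S) + m. -/
theorem stmt2 {Ω 𝒳 𝒳' 𝒮 ℱ : Type*} [Fintype Ω] [Fintype 𝒳] [Fintype 𝒳'] [Fintype 𝒮] [Fintype ℱ]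
    (p : Ω → ℝ) (hp0 : ∀ ω, 0 ≤ p ω) (hp1 : ∑ ω, p ω = 1)
    (X : Ω → 𝒳) (X' : Ω → 𝒳') (S : Ω → 𝒮) (F : Ω → ℱ)
    (hmc : MarkovChain p (fun ω => (S ω, F ω)) X X')
    (m : ℝ) (hS : mi p X' S ≤ m) :
    mi p X' F ≤ condEnt p X S + m := by
  have h1 := condEnt_cond_le p hp0 hp1 X' S F
  have h3 := condEnt_cond_le p hp0 hp1 X' X (fun ω => (S ω, F ω))
  have h4 := condEnt_markov p hp0 (fun ω => (S ω, F ω)) X X' hmc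
  have h5 := condEnt_cond_le p hp0 hp1 X' S X
  have h6 := condEnt_swap p X' X S
  have h7 := cmi_symm p hp0 X' X S
  have h8 := condEnt_nonneg p hp0 X (fun ω => (X' ω, S ω))
  unfold mi at hS ⊢
  linarith [h1, h3, h4, h5, h6, h7, h8]


end MaSS
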